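/- Let U be a finite set, let z be a nondegenerate nonnegative weight vector, let S ⊆ U with |S| ≥ 2, and let p ∈ S be a point of minimum norm in S, i.e., ℓ(p) ≤ ℓ(q) for all q ∈ S. Then f(S ∖ {p}) ≥ f(S) ≥ ℓ(p). -/

import Mathlib

open Finset

variable {α : Type*} [Fintype α] [DecidableEq α]

/-- `E` crosses `S` if both `S ∩ E` and `S \ E` are nonempty. -/
def Crosses (E S : Finset α) : Prop := (S ∩ E).Nonempty ∧ (S \ E).Nonempty

instance (E S : Finset α) : Decidable (Crosses E S) := by unfold Crosses; infer_instance

/-- The family of subsets of the ground set crossing `S`. -/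
def crossers (S : Finset α) : Finset (Finset α) := univ.filter (fun E => Crosses E S)

/-- `ℓ(p)`: total weight of the sets containing `p`. -/
def ell (z : Finset α → ℝ) (p : α) : ℝ := ∑ E ∈ univ.filter (fun E => p ∈ E), z E

lemma card_sdiff_lt_of_mem_crossers {E S : Finset α} (h : E ∈ crossers S) :
    (S \ E).card < S.card := by
  have h' : Crosses E S := (mem_filter.mp h).2
  unfold Crosses at h'
  obtain ⟨⟨x, hx⟩, -⟩ := h'
  refine card_lt_card ((ssubset_iff_of_subset sdiff_subset).mpr ?_)
  exact ⟨x, (mem_inter.mp hx).1, fun hmem => (mem_sdiff.mp hmem).2 (mem_inter.mp hx).2⟩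

/-- The function `f(S)` from the Closest Point Process. -/
noncomputable def fval (z : Finset α → ℝ) (S : Finset α) : ℝ :=
  if S.card ≤ 1 then ∑ p ∈ S, ell z p
  else if 0 < ∑ E ∈ crossers S, z E then
    (∑ E ∈ (crossers S).attach, z E.1 * fval z (S \ E.1)) / (∑ E ∈ crossers S, z E)
  else 0
termination_by S.card
decreasing_by exact card_sdiff_lt_of_mem_crossers E.2

/-- A weight vector is nondegenerate if every `S` with `|S| ≥ 2` has positive crossing weight. -/
def Nondeg (z : Finset α → ℝ) : Prop :=
  ∀ S : Finset α, 2 ≤ S.card → 0 < ∑ E ∈ crossers S, z E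

/-- The partial derivative `∂f(S)/∂z_T`. -/
noncomputable def pderivf (S T : Finset α) (z : Finset α → ℝ) : ℝ :=
  fderiv ℝ (fun w : Finset α → ℝ => fval w S) z (Pi.single T 1)

/-- The pseudo-derivative `∂̂f(S)/∂̂z_T`. -/
noncomputable def pdhat (z : Finset α → ℝ) (S T : Finset α) : ℝ :=
  if S ⊆ T then 1
  else if S ∩ T = ∅ then 0
  else (∑ E ∈ (crossers S).attach, z E.1 * pdhat z (S \ E.1) T
        + fval z (S \ T) - ∑ E ∈ univ.filter (fun E => S ⊆ E), z E)
       / (∑ E ∈ crossers S, z E)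
termination_by S.card
decreasing_by exact card_sdiff_lt_of_mem_crossers E.2

/-- The `m`-th harmonic number. -/
noncomputable def harm (m : ℕ) : ℝ := ∑ j ∈ Finset.range m, 1 / ((j : ℝ) + 1)


/-!
`f(S)` is the `z`-weighted average of `f(S \ E)` over the sets `E` crossing `S`, so it is bounded
below by the smallest norm in `S`. For the monotonicity, write `S' = S \ {p}` and run one step of
the recursion from `S` and from `S'` with the same set `E`. If `p ∈ E` both steps land in the same
set; if `p ∉ E` and `E` crosses `S'`, then `S \ E = insert p (S' \ E)` and induction applies;
otherwise `E` cuts off exactly `p`, contributing `ℓ(p) ≤ f(S')`. Sets crossing `S` but not `S'`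
leave `S'` unchanged, so the coupled average is `f(S')` again.
-/

lemma mem_crossers {E S : Finset α} : E ∈ crossers S ↔ (S ∩ E).Nonempty ∧ (S \ E).Nonempty := by
  rw [crossers, mem_filter]
  exact and_iff_right (mem_univ E)

lemma crossers_mono {S T : Finset α} (h : T ⊆ S) : crossers T ⊆ crossers S := by
  intro E hE
  obtain ⟨hin, hout⟩ := mem_crossers.1 hE
  exact mem_crossers.2
    ⟨hin.mono (inter_subset_inter_right h), hout.mono (sdiff_subset_sdiff h le_rfl)⟩

lemma crossers_eq_empty_of_card_le_one {S : Finset α} (h : #S ≤ 1) : crossers S = ∅ := by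
  refine eq_empty_iff_forall_notMem.2 fun E hE => ?_
  obtain ⟨⟨x, hx⟩, ⟨y, hy⟩⟩ := mem_crossers.1 hE
  rw [mem_inter] at hx
  rw [mem_sdiff] at hy
  have : 1 < #S := one_lt_card.2 ⟨x, hx.1, y, hy.1, fun hxy => hy.2 (hxy ▸ hx.2)⟩
  omega

lemma sdiff_ssubset_of_mem_crossers {E S : Finset α} (h : E ∈ crossers S) : S \ E ⊂ S := by
  obtain ⟨x, hx⟩ := (mem_crossers.1 h).1
  rw [mem_inter] at hx
  exact (ssubset_iff_of_subset sdiff_subset).2 ⟨x, hx.1, fun hx' => (mem_sdiff.1 hx').2 hx.2⟩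

lemma fval_singleton (z : Finset α → ℝ) (q : α) : fval z {q} = ell z q := by
  rw [fval]
  simp

lemma fval_of_two_le_card (z : Finset α → ℝ) {S : Finset α} (hS : 2 ≤ #S)
    (hW : 0 < ∑ E ∈ crossers S, z E) :
    fval z S = (∑ E ∈ crossers S, z E * fval z (S \ E)) / ∑ E ∈ crossers S, z E := by
  rw [fval, if_neg (by omega), if_pos hW, sum_attach (crossers S) fun E => z E * fval z (S \ E)]

/-- The averaging identity behind `fval`; it holds for every `S`, because a crossing family of
total weight zero has all its weights zero. -/
lemma sum_crossers_mul_fval_sdiff {z : Finset α → ℝ} (hz : ∀ E, 0 ≤ z E) (S : Finset α) :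
    ∑ E ∈ crossers S, z E * fval z (S \ E) = (∑ E ∈ crossers S, z E) * fval z S := by
  by_cases hS : #S ≤ 1
  · simp [crossers_eq_empty_of_card_le_one hS]
  rcases (sum_nonneg fun E _ => hz E : 0 ≤ ∑ E ∈ crossers S, z E).lt_or_eq with hW | hW
  · rw [fval_of_two_le_card z (by omega) hW, mul_div_cancel₀ _ hW.ne']
  · have hzero := (sum_eq_zero_iff_of_nonneg fun E _ => hz E).1 hW.symm
    rw [← hW, zero_mul]
    exact sum_eq_zero fun E hE => by rw [hzero E hE, zero_mul]

lemma le_fval_of_forall_le_ell {z : Finset α → ℝ} (hz : ∀ E, 0 ≤ z E) (hnd : Nondeg z) {c : ℝ}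
    {S : Finset α} (hS : S.Nonempty) (hc : ∀ q ∈ S, c ≤ ell z q) : c ≤ fval z S := by
  induction S using Finset.strongInduction with
  | H S ih =>
  by_cases h1 : #S ≤ 1
  · obtain ⟨q, rfl⟩ := card_eq_one.1 (le_antisymm h1 (card_pos.2 hS))
    rw [fval_singleton]
    exact hc q (mem_singleton_self q)
  have hW := hnd S (by omega)
  refine le_of_mul_le_mul_left ?_ hW
  calc (∑ E ∈ crossers S, z E) * c = ∑ E ∈ crossers S, z E * c := sum_mul ..
    _ ≤ ∑ E ∈ crossers S, z E * fval z (S \ E) := by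
      refine sum_le_sum fun E hE => mul_le_mul_of_nonneg_left ?_ (hz E)
      exact ih _ (sdiff_ssubset_of_mem_crossers hE) (mem_crossers.1 hE).2
        fun q hq => hc q (mem_sdiff.1 hq).1
    _ = (∑ E ∈ crossers S, z E) * fval z S := sum_crossers_mul_fval_sdiff hz S

noncomputable def fvalCut (z : Finset α → ℝ) (T E : Finset α) : ℝ :=
  if E ∈ crossers T then fval z (T \ E) else fval z T

lemma sum_mul_fvalCut {z : Finset α → ℝ} (hz : ∀ E, 0 ≤ z E) {T : Finset α}
    {F : Finset (Finset α)} (hF : crossers T ⊆ F) :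
    ∑ E ∈ F, z E * fvalCut z T E = (∑ E ∈ F, z E) * fval z T := by
  rw [← sum_sdiff hF, ← sum_sdiff hF (f := z), add_mul, sum_mul,
    ← sum_crossers_mul_fval_sdiff hz T]
  congr 1
  · exact sum_congr rfl fun E hE => by rw [fvalCut, if_neg (mem_sdiff.1 hE).2]
  · exact sum_congr rfl fun E hE => by rw [fvalCut, if_pos hE]

lemma fval_sdiff_eq_fvalCut_erase (z : Finset α → ℝ) {S E : Finset α} {p : α}
    (hE : E ∈ crossers S) (hpE : p ∈ E) : fval z (S \ E) = fvalCut z (S.erase p) E := by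
  have hSE : S.erase p \ E = S \ E := by
    rw [erase_sdiff_comm, erase_eq_of_notMem fun h => (mem_sdiff.1 h).2 hpE]
  unfold fvalCut
  split_ifs with hE'
  · rw [hSE]
  · have hin : ¬(S.erase p ∩ E).Nonempty := fun h =>
      hE' (mem_crossers.2 ⟨h, hSE ▸ (mem_crossers.1 hE).2⟩)
    have hdisj : Disjoint (S.erase p) E :=
      disjoint_iff_inter_eq_empty.2 (not_nonempty_iff_eq_empty.1 hin)
    rw [← hSE, sdiff_eq_self_of_disjoint hdisj]

lemma sdiff_eq_singleton_of_notMem_crossers_erase {S E : Finset α} {p : α} (hp : p ∈ S)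
    (hE : E ∈ crossers S) (hpE : p ∉ E) (hE' : E ∉ crossers (S.erase p)) : S \ E = {p} := by
  obtain ⟨x, hx⟩ := (mem_crossers.1 hE).1
  rw [mem_inter] at hx
  have hxp : x ≠ p := fun h => hpE (h ▸ hx.2)
  have hin : (S.erase p ∩ E).Nonempty := ⟨x, mem_inter.2 ⟨mem_erase.2 ⟨hxp, hx.1⟩, hx.2⟩⟩
  have hout : S.erase p \ E = ∅ :=
    not_nonempty_iff_eq_empty.1 fun h => hE' (mem_crossers.2 ⟨hin, h⟩)
  rw [← insert_erase hp, insert_sdiff_of_notMem _ hpE, hout]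
  rfl

lemma fval_le_fval_erase {z : Finset α → ℝ} (hz : ∀ E, 0 ≤ z E) (hnd : Nondeg z)
    {S : Finset α} (hS : 2 ≤ #S) {p : α} (hp : p ∈ S) (hmin : ∀ q ∈ S, ell z p ≤ ell z q) :
    fval z S ≤ fval z (S.erase p) := by
  induction S using Finset.strongInduction with
  | H S ih =>
  have hW := hnd S hS
  have hlow : ell z p ≤ fval z (S.erase p) :=
    le_fval_of_forall_le_ell hz hnd (card_pos.1 (by rw [card_erase_of_mem hp]; omega))
      fun q hq => hmin q (mem_of_mem_erase hq)
  have hstep : ∀ E ∈ crossers S, fval z (S \ E) ≤ fvalCut z (S.erase p) E := by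
    intro E hE
    by_cases hpE : p ∈ E
    · exact (fval_sdiff_eq_fvalCut_erase z hE hpE).le
    by_cases hE' : E ∈ crossers (S.erase p)
    · rw [fvalCut, if_pos hE', erase_sdiff_comm]
      obtain ⟨y, hy⟩ := (mem_crossers.1 hE').2
      have hpy : y ≠ p := ne_of_mem_erase (mem_sdiff.1 hy).1
      have hpSE : p ∈ S \ E := mem_sdiff.2 ⟨hp, hpE⟩
      refine ih _ (sdiff_ssubset_of_mem_crossers hE) ?_ hpSE fun q hq => hmin q (mem_sdiff.1 hq).1
      have hySE : y ∈ S \ E := mem_sdiff.2 ⟨mem_of_mem_erase (mem_sdiff.1 hy).1, (mem_sdiff.1 hy).2⟩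
      exact one_lt_card.2 ⟨p, hpSE, y, hySE, hpy.symm⟩
    · rw [fvalCut, if_neg hE', sdiff_eq_singleton_of_notMem_crossers_erase hp hE hpE hE',
        fval_singleton]
      exact hlow
  refine le_of_mul_le_mul_left ?_ hW
  calc (∑ E ∈ crossers S, z E) * fval z S = ∑ E ∈ crossers S, z E * fval z (S \ E) :=
        (sum_crossers_mul_fval_sdiff hz S).symm
    _ ≤ ∑ E ∈ crossers S, z E * fvalCut z (S.erase p) E :=
        sum_le_sum fun E hE => mul_le_mul_of_nonneg_left (hstep E hE) (hz E)
    _ = (∑ E ∈ crossers S, z E) * fval z (S.erase p) :=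
        sum_mul_fvalCut hz (crossers_mono (erase_subset p S))

/-- deleting a point of minimum norm does not decrease `f`. -/
theorem stmt11 {α : Type*} [Fintype α] [DecidableEq α]
    (z : Finset α → ℝ) (hz : ∀ E : Finset α, 0 ≤ z E) (hnd : Nondeg z)
    (S : Finset α) (hScard : 2 ≤ S.card) (p : α) (hp : p ∈ S)
    (hmin : ∀ q ∈ S, ell z p ≤ ell z q) :
    ell z p ≤ fval z S ∧ fval z S ≤ fval z (S \ {p}) := by
  refine ⟨le_fval_of_forall_le_ell hz hnd ⟨p, hp⟩ hmin, ?_⟩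
  rw [sdiff_singleton_eq_erase]
  exact fval_le_fval_erase hz hnd hScard hp hmin
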